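/- Let 𝒪 be an O_F-order in a totally definite quaternion F-algebra D, and consider the right multiplication action of Picent(𝒪) on Cl(𝒪) given by ([I],[P]) ↦ [IP]. If the class [P] ∈ Picent(𝒪) does not lie in the kernel of the homomorphism Nr: Picent(𝒪) → Cl^+(O_F) induced by the reduced norm (i.e., if Nr(P) is not generated by a totally positive element of F^×), then [P] has no fixed points on Cl(𝒪): Cl(𝒪)^{[P]} = ∅. -/

import Mathlib

open Polynomial NumberField IsDedekindDomain
open scoped NumberField Quaternion Classical

noncomputable section

namespace QPaper

/-- An element of a number field is *totally positive* if it is nonzero and positive under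
every real embedding. -/
def TotPos {F : Type*} [Field F] (x : F) : Prop :=
  x ≠ 0 ∧ ∀ σ : F →+* ℝ, 0 < σ x

/-- A number field is *totally real* if all its infinite places are real. -/
def TotallyReal (F : Type*) [Field F] [NumberField F] : Prop :=
  ∀ v : InfinitePlace F, v.IsReal

variable {F : Type*} [Field F]

/-- The quaternion algebra `ℍ[F, a, b]` is *totally definite* iff it is a division (Hamilton)
algebra at every real embedding of `F`; concretely, iff `σ a < 0` and `σ b < 0` for every
real embedding `σ`. -/
def IsTotallyDefinite (a b : F) : Prop :=
  ∀ σ : F →+* ℝ, σ a < 0 ∧ σ b < 0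

/-- The reduced norm of a quaternion. -/
def nrd {R : Type*} [CommRing R] {a b : R} (x : ℍ[R, a, b]) : R :=
  x.re ^ 2 - a * x.imI ^ 2 - b * x.imJ ^ 2 + a * b * x.imK ^ 2

/-- The reduced trace of a quaternion. -/
def trd {R : Type*} [CommRing R] {a b : R} (x : ℍ[R, a, b]) : R := 2 * x.re

/-- Componentwise base change of quaternion algebras along a ring homomorphism. -/
def qmap {R S : Type*} [CommRing R] [CommRing S] (f : R →+* S) {a b : R}
    (x : ℍ[R, a, b]) : ℍ[S, f a, f b] :=
  ⟨f x.re, f x.imI, f x.imJ, f x.imK⟩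

/-- Conjugate of a subset of a ring by a unit. -/
def conjSet {D : Type*} [Ring D] (x : Dˣ) (S : Set D) : Set D :=
  (fun y => (x : D) * y * ((x⁻¹ : Dˣ) : D)) '' S

variable [NumberField F]

/-- `O ⊆ D` is an `O_F`-order of full rank: a subring containing (the image of) `O_F`,
finitely generated as a `ℤ`-module, and spanning `D` over `F`. -/
structure IsOrder {D : Type*} [Ring D] [Algebra F D] (O : Subring D) : Prop where
  scalars : ∀ c : 𝓞 F, algebraMap F D (c : F) ∈ O
  fg : ∃ s : Finset D, (O : Set D) ⊆ (Submodule.span ℤ (s : Set D) : Submodule ℤ D)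
  spans : Submodule.span F (O : Set D) = ⊤

/-- The finite adele ring of a number field. -/
abbrev FAdele (F : Type*) [Field F] [NumberField F] := FiniteAdeleRing (𝓞 F) F

/-- The subring of integral finite adeles. -/
def intAdeles (F : Type*) [Field F] [NumberField F] : Subring (FAdele F) :=
  Subring.closure {x : FAdele F | ∀ v : HeightOneSpectrum (𝓞 F),
    x v ∈ v.adicCompletionIntegers F}

variable (F) in
/-- The finite adelization `D ⊗_F 𝔸_{F,f}` of the quaternion algebra `D = ℍ[F,a,b]`. -/
abbrev Dhat (a b : F) :=
  ℍ[FAdele F, algebraMap F (FAdele F) a, algebraMap F (FAdele F) b]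

variable (F) in
/-- The canonical embedding `D → D ⊗_F 𝔸_{F,f}`. -/
def embD (a b : F) : ℍ[F, a, b] → Dhat F a b :=
  qmap (algebraMap F (FAdele F))

variable (F) in
/-- The adelic completion `𝒪̂ = 𝒪 ⊗_{O_F} Ô_F` of an order `𝒪 ⊆ D`, realized as the subring of
`D̂` generated by the image of `𝒪` and the integral adele scalars. -/
def adOrder (a b : F) (O : Subring ℍ[F, a, b]) : Subring (Dhat F a b) :=
  Subring.closure (embD F a b '' O ∪
    {z | ∃ c ∈ intAdeles F, z = algebraMap (FAdele F) (Dhat F a b) c})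

variable (F) in
/-- Two orders belong to the same genus: their adelic completions are conjugate in `D̂ˣ`. -/
def SameGenus (a b : F) (O O' : Subring ℍ[F, a, b]) : Prop :=
  ∃ x : (Dhat F a b)ˣ, conjSet x (adOrder F a b O) = adOrder F a b O'

variable (F) in
/-- Two orders are of the same type: conjugate by an element of `D^×`. -/
def SameType (a b : F) (O O' : Subring ℍ[F, a, b]) : Prop :=
  ∃ x : (ℍ[F, a, b])ˣ, conjSet x O = O'

variable (F) in
/-- Two orders belong to the same spinor genus: their adelic completions are conjugate by an
element of `D^× · D̂^1`, where `D̂¹` is the reduced norm one subgroup. -/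
def SameSpinorGenus (a b : F) (O O' : Subring ℍ[F, a, b]) : Prop :=
  ∃ x : (Dhat F a b)ˣ,
    (∃ g : ℍ[F, a, b], ∃ s : (Dhat F a b)ˣ, nrd (s : Dhat F a b) = 1 ∧
      (x : Dhat F a b) = embD F a b g * s) ∧
    conjSet x (adOrder F a b O) = adOrder F a b O'

variable (F) in
/-- The type number of an order: the number of `D^×`-conjugacy classes of orders in its genus. -/
def typeNumber (a b : F) (O : Subring ℍ[F, a, b]) : ℕ :=
  Nat.card (Quot fun (O₁ O₂ : {O' : Subring ℍ[F, a, b] // SameGenus F a b O O'}) =>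
    SameType F a b O₁.1 O₂.1)

variable (F) in
/-- The spinor type number of an order: the number of `D^×`-conjugacy classes of orders in its
spinor genus. -/
def spinorTypeNumber (a b : F) (O : Subring ℍ[F, a, b]) : ℕ :=
  Nat.card (Quot fun (O₁ O₂ : {O' : Subring ℍ[F, a, b] // SameSpinorGenus F a b O O'}) =>
    SameType F a b O₁.1 O₂.1)

variable (F) in
/-- The normalizer `N(𝒪̂) ⊆ D̂ˣ` of the adelic completion of an order. -/
def adNormalizer (a b : F) (O : Subring ℍ[F, a, b]) : Set (Dhat F a b)ˣ :=
  {x | conjSet x (adOrder F a b O) = adOrder F a b O}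

variable (F) in
/-- The image `Nr(N(𝒪̂)) ⊆ 𝔸_{F,f}^×` of the adelic normalizer under the reduced norm. -/
def nrdNormalizer (a b : F) (O : Subring ℍ[F, a, b]) : Set (FAdele F)ˣ :=
  {u | ∃ x ∈ adNormalizer F a b O, (u : FAdele F) = nrd (x : Dhat F a b)}

/-- The set of principal ideles coming from totally positive elements of `F^×`. -/
def posPrincipal (F : Type*) [Field F] [NumberField F] : Set (FAdele F)ˣ :=
  {u | ∃ c : F, TotPos c ∧ (u : FAdele F) = algebraMap F (FAdele F) c}

/-- The set of principal ideles coming from `F^×`. -/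
def principalIdeles (F : Type*) [Field F] [NumberField F] : Set (FAdele F)ˣ :=
  {u | ∃ c : F, c ≠ 0 ∧ (u : FAdele F) = algebraMap F (FAdele F) c}

variable (F) in
/-- The subgroup of `𝔸_{F,f}^×` whose quotient is the spinor genus group
`SG(𝒪) = F_+^× \ 𝔸̂^× / Nr(N(𝒪̂))`. -/
def sgSubgroup (a b : F) (O : Subring ℍ[F, a, b]) : Subgroup (FAdele F)ˣ :=
  Subgroup.closure (posPrincipal F ∪ nrdNormalizer F a b O)

variable (F) in
/-- The subgroup of `𝔸_{F,f}^×` whose quotient is the wide spinor genus group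
`WSG(𝒪) = F^× \ 𝔸̂^× / Nr(N(𝒪̂))`. -/
def wsgSubgroup (a b : F) (O : Subring ℍ[F, a, b]) : Subgroup (FAdele F)ˣ :=
  Subgroup.closure (principalIdeles F ∪ nrdNormalizer F a b O)

variable (F) in
/-- The order `|SG(𝒪)|` of the spinor genus group of `𝒪`. -/
def sgCard (a b : F) (O : Subring ℍ[F, a, b]) : ℕ := (sgSubgroup F a b O).index

variable (F) in
/-- The order `|WSG(𝒪)|` of the wide spinor genus group of `𝒪`. -/
def wsgCard (a b : F) (O : Subring ℍ[F, a, b]) : ℕ := (wsgSubgroup F a b O).index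

variable (F) in
/-- The completion `F_𝔭` of `F` at a finite place. -/
abbrev Kv (v : HeightOneSpectrum (𝓞 F)) := v.adicCompletion F

variable (F) in
/-- The completion `D_𝔭 = D ⊗_F F_𝔭` of the quaternion algebra. -/
abbrev Dv (a b : F) (v : HeightOneSpectrum (𝓞 F)) :=
  ℍ[Kv F v, algebraMap F (Kv F v) a, algebraMap F (Kv F v) b]

variable (F) in
/-- The canonical map `D → D_𝔭`. -/
def embDv (a b : F) (v : HeightOneSpectrum (𝓞 F)) : ℍ[F, a, b] → Dv F a b v :=
  qmap (algebraMap F (Kv F v))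

variable (F) in
/-- The completion `𝒪_𝔭` of an order `𝒪 ⊆ D`, realized as the subring of `D_𝔭` generated by
the image of `𝒪` and the scalars from the valuation ring of `F_𝔭`. -/
def localOrder (a b : F) (O : Subring ℍ[F, a, b]) (v : HeightOneSpectrum (𝓞 F)) :
    Subring (Dv F a b v) :=
  Subring.closure (embDv F a b v '' O ∪
    {z | ∃ c ∈ v.adicCompletionIntegers F, z = algebraMap (Kv F v) (Dv F a b v) c})

variable (F) in
/-- An order `𝒪` is *residually unramified at `𝔭`* iff its Eichler invariant at `𝔭` is nonzero,
i.e. iff the quotient of `𝒪_𝔭` by its Jacobson radical is **not** isomorphic to the residue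
field `k_𝔭`; equivalently, iff the scalars `O_{F_𝔭}` do **not** surject onto
`𝒪_𝔭 / J(𝒪_𝔭)`.  (Here `x − c ∈ J(𝒪_𝔭)` is expressed by the standard elementwise
characterisation of the Jacobson radical.) -/
def ResUnrAt (a b : F) (O : Subring ℍ[F, a, b]) (v : HeightOneSpectrum (𝓞 F)) : Prop :=
  ¬ (∀ x ∈ localOrder F a b O v, ∃ c ∈ v.adicCompletionIntegers F,
      ∀ y ∈ localOrder F a b O v, ∃ z ∈ localOrder F a b O v,
        z * (1 - y * (x - algebraMap (Kv F v) (Dv F a b v) c)) = 1 ∧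
        (1 - y * (x - algebraMap (Kv F v) (Dv F a b v) c)) * z = 1)

variable (F) in
/-- An order is *residually unramified* if it is so at every finite place. -/
def ResiduallyUnramified (a b : F) (O : Subring ℍ[F, a, b]) : Prop :=
  ∀ v : HeightOneSpectrum (𝓞 F), ResUnrAt F a b O v

variable (F) in
/-- `D` is ramified at the finite place `𝔭` iff `D_𝔭` is a division ring. -/
def RamifiedAt (a b : F) (v : HeightOneSpectrum (𝓞 F)) : Prop :=
  ∀ x : Dv F a b v, x ≠ 0 → IsUnit x

variable (F) in
/-- `D` is ramified at some finite place of `F`. -/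
def RamifiedSomewhere (a b : F) : Prop :=
  ∃ v : HeightOneSpectrum (𝓞 F), RamifiedAt F a b v

variable (F) in
/-- Ideal classes of locally principal fractional right `𝒪`-ideals, described adelically:
`Cl(𝒪) ≅ D^× \ D̂^× / 𝒪̂^×`. -/
def clRel (a b : F) (O : Subring ℍ[F, a, b]) : (Dhat F a b)ˣ → (Dhat F a b)ˣ → Prop :=
  fun x y => ∃ g : ℍ[F, a, b], ∃ u : (Dhat F a b)ˣ,
    ((u : Dhat F a b) ∈ adOrder F a b O) ∧
    (((u⁻¹ : (Dhat F a b)ˣ) : Dhat F a b) ∈ adOrder F a b O) ∧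
    (x : Dhat F a b) = embD F a b g * y * u

variable (F) in
/-- The right ideal class set `Cl(𝒪)`. -/
def ClSet (a b : F) (O : Subring ℍ[F, a, b]) := Quot (clRel F a b O)

variable (F) in
/-- The class number `h(𝒪) = |Cl(𝒪)|`. -/
def classNumberO (a b : F) (O : Subring ℍ[F, a, b]) : ℕ := Nat.card (ClSet F a b O)

variable (F) in
/-- The left order `𝒪_l(I) = D ∩ x̂ 𝒪̂ x̂⁻¹` of the right ideal attached to `x̂ ∈ D̂ˣ`. -/
def leftOrder (a b : F) (O : Subring ℍ[F, a, b]) (x : (Dhat F a b)ˣ) : Subring ℍ[F, a, b] :=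
  Subring.closure {d : ℍ[F, a, b] | embD F a b d ∈ conjSet x (adOrder F a b O)}

variable (F) in
/-- The subgroup `O_F^× ⊆ D^×` of scalar units. -/
def scalarUnitsD (a b : F) : Subgroup (ℍ[F, a, b])ˣ :=
  Subgroup.closure
    {u : (ℍ[F, a, b])ˣ | ∃ c : (𝓞 F)ˣ, (u : ℍ[F, a, b]) = algebraMap F ℍ[F, a, b] ((c : 𝓞 F) : F)}

/-- The unit group `S^×` of a subring, as a subgroup of the ambient unit group. -/
def unitsIn {D : Type*} [Ring D] (O : Subring D) : Subgroup Dˣ :=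
  Subgroup.closure {u : Dˣ | ((u : D) ∈ O) ∧ (((u⁻¹ : Dˣ) : D) ∈ O)}

variable (F) in
/-- The unit index `w(𝒪') = [𝒪'^× : O_F^×]`. -/
def unitIndexO (a b : F) (O' : Subring ℍ[F, a, b]) : ℕ :=
  (scalarUnitsD F a b).relIndex (unitsIn O')

variable (F) in
/-- The mass `Mass(𝒪) = ∑_{[I] ∈ Cl(𝒪)} 1/[𝒪_l(I)^× : O_F^×]`. -/
def massO (a b : F) (O : Subring ℍ[F, a, b]) : ℚ :=
  ∑ᶠ c : ClSet F a b O, ((unitIndexO F a b (leftOrder F a b O c.out) : ℚ))⁻¹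

variable (F) in
/-- The locally principal fractional right `𝒪`-ideal `D ∩ x̂ 𝒪̂` attached to `x̂ ∈ D̂ˣ`. -/
def rIdeal (a b : F) (O : Subring ℍ[F, a, b]) (x : (Dhat F a b)ˣ) : Set ℍ[F, a, b] :=
  {d | ∃ o ∈ adOrder F a b O, embD F a b d = (x : Dhat F a b) * o}

variable (F) in
/-- The reduced norm of a lattice: the `O_F`-submodule of `F` generated by the reduced norms
of its elements. -/
def normSub (a b : F) (I : Set ℍ[F, a, b]) : Submodule (𝓞 F) F :=
  Submodule.span (𝓞 F) ((fun d => nrd d) '' I)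

variable (F) in
/-- The diagonal entry of the Brandt matrix `𝔅(𝒪,𝔫)` at the class `c`. -/
def brandtDiag (a b : F) (O : Subring ℍ[F, a, b]) (𝔫 : Ideal (𝓞 F)) (c : ClSet F a b O) : ℕ :=
  Nat.card {J : Set ℍ[F, a, b] //
    (∃ y : (Dhat F a b)ˣ, J = rIdeal F a b O y ∧ Quot.mk (clRel F a b O) y = c) ∧
    J ⊆ rIdeal F a b O c.out ∧
    normSub F a b J = 𝔫 • normSub F a b (rIdeal F a b O c.out)}

variable (F) in
/-- The trace of the Brandt matrix `𝔅(𝒪,𝔫)`. -/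
def brandtTrace (a b : F) (O : Subring ℍ[F, a, b]) (𝔫 : Ideal (𝓞 F)) : ℕ :=
  ∑ᶠ c : ClSet F a b O, brandtDiag F a b O 𝔫 c

/-- The set of unit ideles that are integral together with their inverses. -/
def intUnitIdeles (F : Type*) [Field F] [NumberField F] : Set (FAdele F)ˣ :=
  {u | ((u : FAdele F) ∈ intAdeles F) ∧ (((u⁻¹ : (FAdele F)ˣ) : FAdele F) ∈ intAdeles F)}

/-- The narrow class number `h⁺(F) = |F_+^× \ 𝔸̂^× / Ô_F^×|`. -/
def narrowClassNumber (F : Type*) [Field F] [NumberField F] : ℕ :=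
  (Subgroup.closure (posPrincipal F ∪ intUnitIdeles F)).index

variable (F) in
/-- The reduced discriminant `𝔡(𝒪)`, as the `O_F`-module generated by the elements
`trd((xy - yx) z̄)` for `x, y, z ∈ 𝒪`. -/
def redDisc (a b : F) (O : Subring ℍ[F, a, b]) : Submodule (𝓞 F) F :=
  Submodule.span (𝓞 F)
    {c : F | ∃ x ∈ O, ∃ y ∈ O, ∃ z ∈ O, c = trd ((x * y - y * x) * star z)}

variable (F) in
/-- `𝔭 ∣ 𝔡(𝒪)`: the prime `𝔭` divides the reduced discriminant. -/
def dvdDisc (a b : F) (v : HeightOneSpectrum (𝓞 F)) (O : Subring ℍ[F, a, b]) : Prop :=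
  redDisc F a b O ≤ Submodule.span (𝓞 F) ((fun c : 𝓞 F => (c : F)) '' (v.asIdeal : Set (𝓞 F)))

variable (F) in
/-- `ω(𝒪)`: the number of distinct prime divisors of the reduced discriminant. -/
def omegaO (a b : F) (O : Subring ℍ[F, a, b]) : ℕ :=
  Nat.card {v : HeightOneSpectrum (𝓞 F) // dvdDisc F a b v O}

variable (F) in
/-- Equality in `Picent(𝒪) = F^× \ N(𝒪̂) / 𝒪̂^×`. -/
def picRel (a b : F) (O : Subring ℍ[F, a, b]) :
    {x : (Dhat F a b)ˣ // x ∈ adNormalizer F a b O} →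
    {x : (Dhat F a b)ˣ // x ∈ adNormalizer F a b O} → Prop := fun p q =>
  ∃ c : F, c ≠ 0 ∧ ∃ u : (Dhat F a b)ˣ,
    ((u : Dhat F a b) ∈ adOrder F a b O) ∧
    (((u⁻¹ : (Dhat F a b)ˣ) : Dhat F a b) ∈ adOrder F a b O) ∧
    (p.1 : Dhat F a b) = embD F a b (algebraMap F ℍ[F, a, b] c) * q.1 * u

variable (F) in
/-- The order of the central Picard group `Picent(𝒪)`. -/
def picentCard (a b : F) (O : Subring ℍ[F, a, b]) : ℕ := Nat.card (Quot (picRel F a b O))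

/-! ### Quadratic extensions, CM orders and optimal embeddings -/

/-- The quadratic polynomial `X² - t X + m`. -/
def quadPoly (R : Type*) [CommRing R] (t m : R) : R[X] := X ^ 2 - C t * X + C m

/-- The quadratic algebra `K = F[X]/(X² - t X + m)`. -/
abbrev QExt (R : Type*) [CommRing R] (t m : R) := AdjoinRoot (quadPoly R t m)

/-- The distinguished point `λ` (the root of `X² - tX + m`). -/
def qroot (R : Type*) [CommRing R] (t m : R) : QExt R t m := AdjoinRoot.root _

/-- Base change of quadratic algebras along a ring homomorphism. -/
def quadMap {R S : Type*} [CommRing R] [CommRing S] (f : R →+* S) (t m : R) :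
    QExt R t m →+* QExt S (f t) (f m) :=
  AdjoinRoot.lift ((AdjoinRoot.of (quadPoly S (f t) (f m))).comp f)
    (AdjoinRoot.root (quadPoly S (f t) (f m))) <| by
      have h := AdjoinRoot.eval₂_root (quadPoly S (f t) (f m))
      rw [← Polynomial.eval₂_map]
      convert h using 2
      simp [quadPoly]

variable (F) in
/-- The set of optimal embeddings of `B` into `𝒪`: algebra embeddings `φ : K → D` with
`φ(K) ∩ 𝒪 = φ(B)`. -/
def OptEmbs (a b t m : F) (B : Subring (QExt F t m)) (O : Subring ℍ[F, a, b]) :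
    Set (QExt F t m →ₐ[F] ℍ[F, a, b]) :=
  {φ | ∀ z : QExt F t m, φ z ∈ O ↔ z ∈ B}

/-- The normalizer of a subring, as a subset of the ambient ring. -/
def normIn {D : Type*} [Ring D] (O : Subring D) : Set D :=
  {d | ∃ x : Dˣ, (x : D) = d ∧ conjSet x O = O}

variable (F) in
/-- The set of restricted optimal embeddings of the pointed order `(B, λ)` into `𝒪`:
optimal embeddings with `φ(λ) ∈ N(𝒪)`. -/
def ROptEmbs (a b t m : F) (B : Subring (QExt F t m)) (O : Subring ℍ[F, a, b]) :
    Set (QExt F t m →ₐ[F] ℍ[F, a, b]) :=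
  {φ | φ ∈ OptEmbs F a b t m B O ∧ φ (qroot F t m) ∈ normIn O}

variable (F) in
/-- `n((B,λ),𝒪,𝒪^×)`: the number of `𝒪^×`-conjugacy classes of restricted optimal
embeddings. -/
def nGlobal (a b t m : F) (B : Subring (QExt F t m)) (O : Subring ℍ[F, a, b]) : ℕ :=
  Nat.card (Quot fun (φ ψ : {φ // φ ∈ ROptEmbs F a b t m B O}) =>
    ∃ u : (ℍ[F, a, b])ˣ, ((u : ℍ[F, a, b]) ∈ O) ∧ (((u⁻¹ : (ℍ[F, a, b])ˣ) : ℍ[F, a, b]) ∈ O) ∧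
      ∀ z, ψ.1 z = ((u⁻¹ : (ℍ[F, a, b])ˣ) : ℍ[F, a, b]) * φ.1 z * u)

variable (F) in
/-- `m(B,𝒪,𝒪^×)`: the number of `𝒪^×`-conjugacy classes of optimal embeddings. -/
def mGlobal (a b t m : F) (B : Subring (QExt F t m)) (O : Subring ℍ[F, a, b]) : ℕ :=
  Nat.card (Quot fun (φ ψ : {φ // φ ∈ OptEmbs F a b t m B O}) =>
    ∃ u : (ℍ[F, a, b])ˣ, ((u : ℍ[F, a, b]) ∈ O) ∧ (((u⁻¹ : (ℍ[F, a, b])ˣ) : ℍ[F, a, b]) ∈ O) ∧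
      ∀ z, ψ.1 z = ((u⁻¹ : (ℍ[F, a, b])ˣ) : ℍ[F, a, b]) * φ.1 z * u)

variable (F) in
/-- The local completion `B_𝔭` of an order `B ⊆ K`. -/
def BvOrd (t m : F) (B : Subring (QExt F t m)) (v : HeightOneSpectrum (𝓞 F)) :
    Subring (QExt (Kv F v) (algebraMap F (Kv F v) t) (algebraMap F (Kv F v) m)) :=
  Subring.closure ((quadMap (algebraMap F (Kv F v)) t m) '' B ∪
    {z | ∃ c ∈ v.adicCompletionIntegers F,
      z = algebraMap (Kv F v)
        (QExt (Kv F v) (algebraMap F (Kv F v) t) (algebraMap F (Kv F v) m)) c})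

variable (F) in
/-- The local restricted optimal embeddings of `(B_𝔭, λ)` into `𝒪_𝔭`. -/
def ROptEmbsLoc (a b t m : F) (B : Subring (QExt F t m)) (O : Subring ℍ[F, a, b])
    (v : HeightOneSpectrum (𝓞 F)) :
    Set (QExt (Kv F v) (algebraMap F (Kv F v) t) (algebraMap F (Kv F v) m)
      →ₐ[Kv F v] Dv F a b v) :=
  {φ | (∀ z, φ z ∈ localOrder F a b O v ↔ z ∈ BvOrd F t m B v) ∧
    φ (qroot (Kv F v) (algebraMap F (Kv F v) t) (algebraMap F (Kv F v) m))
      ∈ normIn (localOrder F a b O v)}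

variable (F) in
/-- The local optimal embeddings of `B_𝔭` into `𝒪_𝔭`. -/
def OptEmbsLoc (a b t m : F) (B : Subring (QExt F t m)) (O : Subring ℍ[F, a, b])
    (v : HeightOneSpectrum (𝓞 F)) :
    Set (QExt (Kv F v) (algebraMap F (Kv F v) t) (algebraMap F (Kv F v) m)
      →ₐ[Kv F v] Dv F a b v) :=
  {φ | ∀ z, φ z ∈ localOrder F a b O v ↔ z ∈ BvOrd F t m B v}

variable (F) in
/-- `n_𝔭(B,λ) = n((B_𝔭,λ), 𝒪_𝔭, 𝒪_𝔭^×)`. -/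
def nLocal (a b t m : F) (B : Subring (QExt F t m)) (O : Subring ℍ[F, a, b])
    (v : HeightOneSpectrum (𝓞 F)) : ℕ :=
  Nat.card (Quot fun (φ ψ : {φ // φ ∈ ROptEmbsLoc F a b t m B O v}) =>
    ∃ u : (Dv F a b v)ˣ, ((u : Dv F a b v) ∈ localOrder F a b O v) ∧
      (((u⁻¹ : (Dv F a b v)ˣ) : Dv F a b v) ∈ localOrder F a b O v) ∧
      ∀ z, ψ.1 z = ((u⁻¹ : (Dv F a b v)ˣ) : Dv F a b v) * φ.1 z * u)

variable (F) in
/-- `m_𝔭(B) = m(B_𝔭, 𝒪_𝔭, 𝒪_𝔭^×)`. -/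
def mLocal (a b t m : F) (B : Subring (QExt F t m)) (O : Subring ℍ[F, a, b])
    (v : HeightOneSpectrum (𝓞 F)) : ℕ :=
  Nat.card (Quot fun (φ ψ : {φ // φ ∈ OptEmbsLoc F a b t m B O v}) =>
    ∃ u : (Dv F a b v)ˣ, ((u : Dv F a b v) ∈ localOrder F a b O v) ∧
      (((u⁻¹ : (Dv F a b v)ˣ) : Dv F a b v) ∈ localOrder F a b O v) ∧
      ∀ z, ψ.1 z = ((u⁻¹ : (Dv F a b v)ˣ) : Dv F a b v) * φ.1 z * u)

variable (F) in
/-- The adelization `K̂ = K ⊗_F 𝔸_{F,f}` of the quadratic algebra `K`. -/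
abbrev Khat (t m : F) :=
  QExt (FAdele F) (algebraMap F (FAdele F) t) (algebraMap F (FAdele F) m)

variable (F) in
/-- The canonical embedding `K → K̂`. -/
def embK (t m : F) : QExt F t m →+* Khat F t m := quadMap (algebraMap F (FAdele F)) t m

variable (F) in
/-- The adelic completion `B̂` of an order `B ⊆ K`. -/
def adOrderK (t m : F) (B : Subring (QExt F t m)) : Subring (Khat F t m) :=
  Subring.closure (embK F t m '' B ∪
    {z | ∃ c ∈ intAdeles F, z = algebraMap (FAdele F) (Khat F t m) c})

variable (F) in
/-- The class number `h(B) = |Pic(B)| = |K^× \ K̂^× / B̂^×|`. -/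
def hB (t m : F) (B : Subring (QExt F t m)) : ℕ :=
  Nat.card (Quot fun (x y : (Khat F t m)ˣ) =>
    ∃ g : QExt F t m, ∃ u : (Khat F t m)ˣ,
      ((u : Khat F t m) ∈ adOrderK F t m B) ∧
      (((u⁻¹ : (Khat F t m)ˣ) : Khat F t m) ∈ adOrderK F t m B) ∧
      (x : Khat F t m) = embK F t m g * y * u)

variable (F) in
/-- The subgroup `O_F^× ⊆ K^×` of scalar units. -/
def scalarUnitsK (t m : F) : Subgroup (QExt F t m)ˣ :=
  Subgroup.closure
    {u : (QExt F t m)ˣ | ∃ c : (𝓞 F)ˣ,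
      (u : QExt F t m) = algebraMap F (QExt F t m) ((c : 𝓞 F) : F)}

variable (F) in
/-- The unit index `w(B) = [B^× : O_F^×]`. -/
def wB (t m : F) (B : Subring (QExt F t m)) : ℕ :=
  (scalarUnitsK F t m).relIndex (unitsIn B)

variable (F) in
/-- Scaling of a subset of an `F`-algebra by an integral ideal `𝔞 ⊆ O_F`:
the additive monoid of finite sums `∑ cᵢ xᵢ` with `cᵢ ∈ 𝔞` and `xᵢ ∈ S`. -/
def iScale {A : Type*} [Ring A] [Algebra F A] (𝔞 : Ideal (𝓞 F)) (S : Set A) : Set A :=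
  {z | z ∈ AddSubmonoid.closure
    {w : A | ∃ c ∈ 𝔞, ∃ x ∈ S, w = algebraMap F A ((c : 𝓞 F) : F) * x}}

variable (F) in
/-- `P` is a primitive two-sided `𝒪`-ideal: an invertible (locally principal) two-sided
integral ideal not contained in `𝔭𝒪` for any prime `𝔭`. -/
def IsPrimTwoSided (a b : F) (O : Subring ℍ[F, a, b]) (P : Set ℍ[F, a, b]) : Prop :=
  (∃ x : (Dhat F a b)ˣ, x ∈ adNormalizer F a b O ∧ P = rIdeal F a b O x) ∧
  P ⊆ (O : Set ℍ[F, a, b]) ∧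
  ∀ v : HeightOneSpectrum (𝓞 F), ¬ (P ⊆ iScale F v.asIdeal (O : Set ℍ[F, a, b]))

variable (F) in
/-- `ν(𝒪)`: the set of reduced norms of primitive two-sided `𝒪`-ideals. -/
def nuSet (a b : F) (O : Subring ℍ[F, a, b]) : Set (Submodule (𝓞 F) F) :=
  {N | ∃ P : Set ℍ[F, a, b], IsPrimTwoSided F a b O P ∧ N = normSub F a b P}

/-- Two nonzero ideals of `O_F` belong to the same ideal class. -/
def SameIdealClass {F : Type*} [Field F] [NumberField F] (I J : Ideal (𝓞 F)) : Prop :=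
  ∃ x y : 𝓞 F, x ≠ 0 ∧ y ≠ 0 ∧ Ideal.span {x} * I = Ideal.span {y} * J

/-- `S` is a complete set of integral ideal representatives of `Cl(O_F)`, with `O_F ∈ S`. -/
def IsClassReps (F : Type*) [Field F] [NumberField F] (S : Set (Ideal (𝓞 F))) : Prop :=
  (⊤ : Ideal (𝓞 F)) ∈ S ∧ (∀ I ∈ S, I ≠ ⊥) ∧
    ∀ J : Ideal (𝓞 F), J ≠ ⊥ → ∃! I, I ∈ S ∧ SameIdealClass I J

/-- `U` is a complete set of representatives of `O_{F,+}^× / (O_F^×)²`. -/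
def IsUnitReps (F : Type*) [Field F] [NumberField F] (U : Set (𝓞 F)ˣ) : Prop :=
  (∀ u ∈ U, TotPos (((u : 𝓞 F) : F))) ∧
  ∀ w : (𝓞 F)ˣ, TotPos (((w : 𝓞 F) : F)) → ∃! u, u ∈ U ∧ ∃ z : (𝓞 F)ˣ, w = u * z * z

variable (F) in
/-- `β` is a choice of totally positive generators `β_{(𝔞,℘)}` of `𝔞²℘` for the pairs
`(𝔞,℘) ∈ ℐ × ν(𝒪)` for which such a generator exists. -/
def IsGenChoice (a b : F) (O : Subring ℍ[F, a, b]) (S : Set (Ideal (𝓞 F)))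
    (β : Ideal (𝓞 F) → Submodule (𝓞 F) F → F) : Prop :=
  ∀ 𝔞 ∈ S, ∀ ℘ ∈ nuSet F a b O,
    (∃ γ : F, TotPos γ ∧ (𝔞 * 𝔞) • ℘ = Submodule.span (𝓞 F) {γ}) →
    TotPos (β 𝔞 ℘) ∧ (𝔞 * 𝔞) • ℘ = Submodule.span (𝓞 F) {β 𝔞 ℘}

variable (F) in
/-- A pointed CM `O_F`-order `(B, λ)`: the trace `t` and norm `m` of `λ` together with an
order `B` in `K = F[X]/(X² - tX + m)`; the distinguished point is `λ = qroot F t m`. -/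
def PtOrd := Σ t : F, Σ m : F, Subring (QExt F t m)

variable (F) in
/-- The finite set `𝓑` of pointed CM `O_F`-orders attached to the order `𝒪` and the fixed
representative data `(ℐ, 𝒰, β)`. -/
def BFamily (a b : F) (O : Subring ℍ[F, a, b]) (S : Set (Ideal (𝓞 F))) (U : Set (𝓞 F)ˣ)
    (β : Ideal (𝓞 F) → Submodule (𝓞 F) F → F) : Set (PtOrd F) :=
  {p | ∃ 𝔞 ∈ S, ∃ ℘ ∈ nuSet F a b O, ∃ ε ∈ U,
    (∃ t₀ ∈ 𝔞, ((t₀ : 𝓞 F) : F) = p.1) ∧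
    p.2.1 = ((ε : 𝓞 F) : F) * β 𝔞 ℘ ∧
    (∀ σ : F →+* ℝ, σ (p.1 ^ 2 - 4 * p.2.1) < 0) ∧
    IsOrder (F := F) p.2.2 ∧
    qroot F p.1 p.2.1 ∈ iScale F 𝔞 (p.2.2 : Set (QExt F p.1 p.2.1)) ∧
    (∀ z ∈ p.2.2, qroot F p.1 p.2.1 * z ∈ iScale F 𝔞 (p.2.2 : Set (QExt F p.1 p.2.1))) ∧
    ∀ v : HeightOneSpectrum (𝓞 F),
      ¬ (∀ z ∈ p.2.2, qroot F p.1 p.2.1 * z ∈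
          iScale F (v.asIdeal * 𝔞) (p.2.2 : Set (QExt F p.1 p.2.1)))}

variable (F) in
/-- The optimal spinor selectivity symbol `Δ(B,𝒪)`: `1` if some order in the spinor genus of
`𝒪` admits an optimal embedding of `B`, and `0` otherwise. -/
def DeltaEmb (a b t m : F) (B : Subring (QExt F t m)) (O : Subring ℍ[F, a, b]) : ℕ :=
  if ∃ O' : Subring ℍ[F, a, b], SameSpinorGenus F a b O O' ∧ (OptEmbs F a b t m B O').Nonempty
  then 1 else 0

variable (F) in
/-- The restricted selectivity symbol `Δ^res((B,λ),𝒪)`. -/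
def DeltaREmb (a b t m : F) (B : Subring (QExt F t m)) (O : Subring ℍ[F, a, b]) : ℕ :=
  if ∃ O' : Subring ℍ[F, a, b], SameSpinorGenus F a b O O' ∧ (ROptEmbs F a b t m B O').Nonempty
  then 1 else 0

variable (F) in
/-- `F_K^×`: elements of `F^×` positive at every infinite place of `F` ramified in `K/F`. -/
def FKset (t m : F) : Set F :=
  {c | c ≠ 0 ∧ ∀ σ : F →+* ℝ, σ (t ^ 2 - 4 * m) < 0 → 0 < σ c}

variable (F) in
/-- `F_D^×`: elements of `F^×` positive at every infinite place of `F` ramified in `D`. -/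
def FDset (a b : F) : Set F :=
  {c | c ≠ 0 ∧ ∀ σ : F →+* ℝ, (σ a < 0 ∧ σ b < 0) → 0 < σ c}

variable (F) in
/-- The norm subgroup `F_K^× · Nm(K̂^×) ⊆ 𝔸̂^×` corresponding to `K` by class field theory. -/
def HKsub (t m : F) : Subgroup (FAdele F)ˣ :=
  Subgroup.closure
    ({u | ∃ c ∈ FKset F t m, (u : FAdele F) = algebraMap F (FAdele F) c} ∪
     {u | ∃ w : (Khat F t m)ˣ, (u : FAdele F) = Algebra.norm (FAdele F) (w : Khat F t m)})

variable (F) in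
/-- The subgroup `F_D^× · Nr(N(𝒪̂)) ⊆ 𝔸̂^×` corresponding to the spinor genus field `Σ` by
class field theory. -/
def HSigma (a b : F) (O : Subring ℍ[F, a, b]) : Subgroup (FAdele F)ˣ :=
  Subgroup.closure
    ({u | ∃ c ∈ FDset F a b, (u : FAdele F) = algebraMap F (FAdele F) c} ∪
     nrdNormalizer F a b O)

variable (F) in
/-- The selectivity symbol `s(B,𝒪)`: `1` if `K ⊆ Σ` (expressed via class field theory as the
containment of the corresponding norm subgroups), else `0`. -/
def sSymb (a b t m : F) (O : Subring ℍ[F, a, b]) : ℕ :=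
  if HSigma F a b O ≤ HKsub F t m then 1 else 0

variable (F) in
/-- The restricted class number `h_D(F) = |F_D^× \ 𝔸̂^× / Ô_F^×|`. -/
def hDF (a b : F) : ℕ :=
  (Subgroup.closure
    (({u | ∃ c ∈ FDset F a b, (u : FAdele F) = algebraMap F (FAdele F) c} ∪
     intUnitIdeles F : Set (FAdele F)ˣ))).index

variable (F) in
/-- Two ideles give right ideals in the same spinor class: they differ by `D^× · D̂¹`. -/
def SameSpinorClass (a b : F) (x y : (Dhat F a b)ˣ) : Prop :=
  ∃ g : ℍ[F, a, b], ∃ s : (Dhat F a b)ˣ, nrd (s : Dhat F a b) = 1 ∧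
    (x : Dhat F a b) = embD F a b g * s * y



/-! ### Auxiliary lemmas for `picent_action_no_fixed_points` -/

section QuatGeneric

open Quaternion

variable {R₁ S₁ : Type*} [CommRing R₁] [CommRing S₁]

theorem nrd_zero' {a b : R₁} : nrd (0 : ℍ[R₁, a, b]) = 0 := by
  simp [nrd]

theorem nrd_one' {a b : R₁} : nrd (1 : ℍ[R₁, a, b]) = 1 := by
  simp [nrd]

theorem nrd_mul' {a b : R₁} (x y : ℍ[R₁, a, b]) : nrd (x * y) = nrd x * nrd y := by
  simp only [nrd, QuaternionAlgebra.re_mul, QuaternionAlgebra.imI_mul,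
    QuaternionAlgebra.imJ_mul, QuaternionAlgebra.imK_mul]
  ring

theorem nrd_neg' {a b : R₁} (x : ℍ[R₁, a, b]) : nrd (-x) = nrd x := by
  simp only [nrd, QuaternionAlgebra.re_neg, QuaternionAlgebra.imI_neg,
    QuaternionAlgebra.imJ_neg, QuaternionAlgebra.imK_neg]
  ring

/-- The polar form of the reduced norm. -/
def pol {a b : R₁} (x y : ℍ[R₁, a, b]) : R₁ :=
  2 * (x.re * y.re) - 2 * a * (x.imI * y.imI) - 2 * b * (x.imJ * y.imJ)
    + 2 * (a * b) * (x.imK * y.imK)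

theorem nrd_add' {a b : R₁} (x y : ℍ[R₁, a, b]) : nrd (x + y) = nrd x + nrd y + pol x y := by
  simp only [nrd, pol, QuaternionAlgebra.re_add, QuaternionAlgebra.imI_add,
    QuaternionAlgebra.imJ_add, QuaternionAlgebra.imK_add]
  ring

theorem pol_eq {a b : R₁} (x y : ℍ[R₁, a, b]) : pol x y = nrd (x + y) - nrd x - nrd y := by
  rw [nrd_add']; ring

theorem pol_comm {a b : R₁} (x y : ℍ[R₁, a, b]) : pol x y = pol y x := by
  simp only [pol]; ring

theorem pol_add_right {a b : R₁} (x y z : ℍ[R₁, a, b]) :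
    pol x (y + z) = pol x y + pol x z := by
  simp only [pol, QuaternionAlgebra.re_add, QuaternionAlgebra.imI_add,
    QuaternionAlgebra.imJ_add, QuaternionAlgebra.imK_add]
  ring

theorem pol_add_left {a b : R₁} (x y z : ℍ[R₁, a, b]) :
    pol (x + y) z = pol x z + pol y z := by
  rw [pol_comm, pol_add_right, pol_comm z x, pol_comm z y]

theorem pol_neg_right {a b : R₁} (x y : ℍ[R₁, a, b]) : pol x (-y) = -pol x y := by
  simp only [pol, QuaternionAlgebra.re_neg, QuaternionAlgebra.imI_neg,
    QuaternionAlgebra.imJ_neg, QuaternionAlgebra.imK_neg]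
  ring

theorem pol_neg_left {a b : R₁} (x y : ℍ[R₁, a, b]) : pol (-x) y = -pol x y := by
  rw [pol_comm, pol_neg_right, pol_comm]

theorem pol_zero_right {a b : R₁} (x : ℍ[R₁, a, b]) : pol x 0 = 0 := by
  simp [pol]

theorem pol_zero_left {a b : R₁} (x : ℍ[R₁, a, b]) : pol 0 x = 0 := by
  rw [pol_comm, pol_zero_right]

theorem pol_smul' {a b : R₁} (c c' : R₁) (x y : ℍ[R₁, a, b]) :
    pol (c • x) (c' • y) = (c * c') * pol x y := by
  simp only [pol, QuaternionAlgebra.re_smul, QuaternionAlgebra.imI_smul,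
    QuaternionAlgebra.imJ_smul, QuaternionAlgebra.imK_smul, smul_eq_mul]
  ring

theorem qmap_zero' (f : R₁ →+* S₁) {a b : R₁} : qmap f (0 : ℍ[R₁, a, b]) = 0 := by
  ext <;> simp [qmap]

theorem qmap_one' (f : R₁ →+* S₁) {a b : R₁} : qmap f (1 : ℍ[R₁, a, b]) = 1 := by
  ext <;> simp [qmap]

theorem qmap_add' (f : R₁ →+* S₁) {a b : R₁} (x y : ℍ[R₁, a, b]) :
    qmap f (x + y) = qmap f x + qmap f y := by
  ext <;> simp [qmap]

theorem qmap_mul' (f : R₁ →+* S₁) {a b : R₁} (x y : ℍ[R₁, a, b]) :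
    qmap f (x * y) = qmap f x * qmap f y := by
  ext <;>
    simp only [qmap, QuaternionAlgebra.re_mul, QuaternionAlgebra.imI_mul,
      QuaternionAlgebra.imJ_mul, QuaternionAlgebra.imK_mul, map_add, map_sub, map_mul, map_zero]

theorem nrd_qmap' (f : R₁ →+* S₁) {a b : R₁} (x : ℍ[R₁, a, b]) :
    nrd (qmap f x) = f (nrd x) := by
  simp only [nrd, qmap, map_add, map_sub, map_mul, map_pow]

theorem pol_qmap' (f : R₁ →+* S₁) {a b : R₁} (x y : ℍ[R₁, a, b]) :
    pol (qmap f x) (qmap f y) = f (pol x y) := by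
  rw [pol_eq, pol_eq, ← qmap_add', nrd_qmap', nrd_qmap', nrd_qmap', ← map_sub, ← map_sub]

theorem nrd_algebraMap' {a b : R₁} (c : R₁) : nrd (algebraMap R₁ ℍ[R₁, a, b] c) = c * c := by
  rw [QuaternionAlgebra.algebraMap_eq]
  simp only [nrd]
  ring

theorem mul_star_self' {a b : R₁} (x : ℍ[R₁, a, b]) :
    x * star x = algebraMap R₁ ℍ[R₁, a, b] (nrd x) := by
  rw [QuaternionAlgebra.algebraMap_eq]
  ext <;>
    simp only [nrd, QuaternionAlgebra.re_mul, QuaternionAlgebra.imI_mul,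
      QuaternionAlgebra.imJ_mul, QuaternionAlgebra.imK_mul, QuaternionAlgebra.re_star,
      QuaternionAlgebra.imI_star, QuaternionAlgebra.imJ_star, QuaternionAlgebra.imK_star] <;>
    ring

theorem star_mul_self'' {a b : R₁} (x : ℍ[R₁, a, b]) :
    star x * x = algebraMap R₁ ℍ[R₁, a, b] (nrd x) := by
  rw [QuaternionAlgebra.algebraMap_eq]
  ext <;>
    simp only [nrd, QuaternionAlgebra.re_mul, QuaternionAlgebra.imI_mul,
      QuaternionAlgebra.imJ_mul, QuaternionAlgebra.imK_mul, QuaternionAlgebra.re_star,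
      QuaternionAlgebra.imI_star, QuaternionAlgebra.imJ_star, QuaternionAlgebra.imK_star] <;>
    ring

theorem central_reorg {A : Type*} [Ring A] [Algebra R₁ A] (c c' : R₁) (x y : A) :
    (algebraMap R₁ A c * x) * (algebraMap R₁ A c' * y) = algebraMap R₁ A (c * c') * (x * y) := by
  rw [map_mul, mul_assoc (algebraMap R₁ A c) x (algebraMap R₁ A c' * y),
    ← mul_assoc x (algebraMap R₁ A c') y, ← Algebra.commutes c' x,
    mul_assoc (algebraMap R₁ A c') x y,
    ← mul_assoc (algebraMap R₁ A c) (algebraMap R₁ A c') (x * y)]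

end QuatGeneric

section IntegralityGeneric

theorem aeval_star_int {A : Type*} [Ring A] [StarRing A] (x : A) (p : Polynomial ℤ) :
    Polynomial.aeval (star x) p = star (Polynomial.aeval x p) := by
  induction p using Polynomial.induction_on' with
  | add p q hp hq => simp [hp, hq]
  | monomial n c =>
    rw [Polynomial.aeval_monomial, Polynomial.aeval_monomial, eq_intCast,
      star_mul, star_pow, star_intCast]
    exact (Int.cast_commute c _).eq

theorem isIntegral_star_int {A : Type*} [Ring A] [StarRing A] {x : A}
    (h : IsIntegral ℤ x) : IsIntegral ℤ (star x) := by
  obtain ⟨p, hm, hp⟩ := h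
  refine ⟨p, hm, ?_⟩
  rw [← Polynomial.aeval_def] at hp ⊢
  rw [aeval_star_int, hp, star_zero]

theorem isIntegral_mul_of_commute {A : Type*} [Ring A] {x y : A} (h : Commute x y)
    (hx : IsIntegral ℤ x) (hy : IsIntegral ℤ y) : IsIntegral ℤ (x * y) := by
  have hcomm : ∀ a ∈ ({x, y} : Set A), ∀ b ∈ ({x, y} : Set A), a * b = b * a := by
    rintro a ha b hb
    rcases ha with rfl | ha <;> rcases hb with rfl | hb
    · rfl
    · rw [Set.mem_singleton_iff] at hb; subst hb; exact h.eq
    · rw [Set.mem_singleton_iff] at ha; subst ha; exact h.symm.eq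
    · rw [Set.mem_singleton_iff] at ha hb; subst ha; subst hb; rfl
  letI : CommRing (Algebra.adjoin ℤ ({x, y} : Set A)) := Algebra.adjoinCommRingOfComm ℤ hcomm
  have hxm : x ∈ Algebra.adjoin ℤ ({x, y} : Set A) :=
    Algebra.subset_adjoin (Set.mem_insert _ _)
  have hym : y ∈ Algebra.adjoin ℤ ({x, y} : Set A) :=
    Algebra.subset_adjoin (Set.mem_insert_iff.mpr (Or.inr rfl))
  have hx' : IsIntegral ℤ (⟨x, hxm⟩ : Algebra.adjoin ℤ ({x, y} : Set A)) := by
    rw [← isIntegral_algHom_iff (Algebra.adjoin ℤ ({x, y} : Set A)).val Subtype.val_injective]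
    exact hx
  have hy' : IsIntegral ℤ (⟨y, hym⟩ : Algebra.adjoin ℤ ({x, y} : Set A)) := by
    rw [← isIntegral_algHom_iff (Algebra.adjoin ℤ ({x, y} : Set A)).val Subtype.val_injective]
    exact hy
  have hmul := hx'.mul hy'
  have h2 := (isIntegral_algHom_iff (Algebra.adjoin ℤ ({x, y} : Set A)).val
    Subtype.val_injective).mpr hmul
  simpa using h2

theorem fg_of_le_fg {M : Type*} [AddCommGroup M] [Module ℤ M] {P N : Submodule ℤ M}
    (h : P ≤ N) (hN : N.FG) : P.FG :=
  isNoetherian_submodule.mp (isNoetherian_of_fg_of_noetherian N hN) P h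

end IntegralityGeneric

section MainAux

variable {a b : F} [NumberField F]

theorem embD_zero' : embD F a b 0 = 0 := qmap_zero' _

theorem embD_one' : embD F a b 1 = 1 := qmap_one' _

theorem embD_mul' (x y : ℍ[F, a, b]) : embD F a b (x * y) = embD F a b x * embD F a b y :=
  qmap_mul' _ x y

theorem nrd_embD' (x : ℍ[F, a, b]) :
    nrd (embD F a b x) = algebraMap F (FAdele F) (nrd x) := nrd_qmap' _ x

theorem isIntegral_of_mem_order {O : Subring ℍ[F, a, b]} (hord : IsOrder (F := F) O)
    {o : ℍ[F, a, b]} (ho : o ∈ O) : IsIntegral ℤ o := by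
  obtain ⟨s, hs⟩ := hord.fg
  have hle : (subalgebraOfSubring O).toSubmodule ≤ Submodule.span ℤ (s : Set ℍ[F, a, b]) := by
    intro z hz
    exact hs (by simpa [Subalgebra.mem_toSubmodule, mem_subalgebraOfSubring] using hz)
  have hfg : (subalgebraOfSubring O).toSubmodule.FG :=
    fg_of_le_fg hle (Submodule.fg_span s.finite_toSet)
  exact IsIntegral.of_mem_of_fg _ hfg o (mem_subalgebraOfSubring.mpr ho)

theorem isIntegral_nrd {o : ℍ[F, a, b]} (h : IsIntegral ℤ o) : IsIntegral ℤ (nrd o) := by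
  have hst : IsIntegral ℤ (star o) := isIntegral_star_int h
  have hcomm : Commute o (star o) := by
    unfold Commute SemiconjBy
    rw [mul_star_self', star_mul_self'']
  have hmul : IsIntegral ℤ (o * star o) := isIntegral_mul_of_commute hcomm h hst
  rw [mul_star_self'] at hmul
  exact (isIntegral_algebraMap_iff (QuaternionAlgebra.algebraMap_injective)).mp hmul

theorem int_mem_intAdeles (n : 𝓞 F) :
    algebraMap F (FAdele F) (n : F) ∈ intAdeles F := by
  refine Subring.subset_closure ?_
  intro v
  exact HeightOneSpectrum.coe_mem_adicCompletionIntegers (R := 𝓞 F) (K := F) v n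

theorem algnrd_mem_intAdeles {O : Subring ℍ[F, a, b]} (hord : IsOrder (F := F) O)
    {o : ℍ[F, a, b]} (ho : o ∈ O) :
    algebraMap F (FAdele F) (nrd o) ∈ intAdeles F := by
  have h2 : IsIntegral ℤ (nrd o) := isIntegral_nrd (isIntegral_of_mem_order hord ho)
  exact int_mem_intAdeles (⟨nrd o, h2⟩ : 𝓞 F)

theorem algpol_mem_intAdeles {O : Subring ℍ[F, a, b]} (hord : IsOrder (F := F) O)
    {o o' : ℍ[F, a, b]} (ho : o ∈ O) (ho' : o' ∈ O) :
    algebraMap F (FAdele F) (pol o o') ∈ intAdeles F := by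
  rw [pol_eq, map_sub, map_sub]
  exact sub_mem (sub_mem (algnrd_mem_intAdeles hord (add_mem ho ho'))
    (algnrd_mem_intAdeles hord ho)) (algnrd_mem_intAdeles hord ho')

/-- The generating set of `adOrder` as an additive group. -/
def genSet (a b : F) (O : Subring ℍ[F, a, b]) : Set (Dhat F a b) :=
  {w | ∃ c ∈ intAdeles F, ∃ o ∈ O, w = algebraMap (FAdele F) (Dhat F a b) c * embD F a b o}

theorem genSet_one {O : Subring ℍ[F, a, b]} : (1 : Dhat F a b) ∈ genSet a b O :=
  ⟨1, one_mem _, 1, one_mem _, by rw [map_one, embD_one', one_mul]⟩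

theorem genSet_mul {O : Subring ℍ[F, a, b]} {w w' : Dhat F a b}
    (hw : w ∈ genSet a b O) (hw' : w' ∈ genSet a b O) : w * w' ∈ genSet a b O := by
  obtain ⟨c, hc, o, ho, rfl⟩ := hw
  obtain ⟨c', hc', o', ho', rfl⟩ := hw'
  exact ⟨c * c', mul_mem hc hc', o * o', mul_mem ho ho', by
    rw [central_reorg, embD_mul']⟩

theorem addClosure_mul {O : Subring ℍ[F, a, b]} {x y : Dhat F a b}
    (hx : x ∈ AddSubgroup.closure (genSet a b O)) (hy : y ∈ AddSubgroup.closure (genSet a b O)) :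
    x * y ∈ AddSubgroup.closure (genSet a b O) := by
  induction hx using AddSubgroup.closure_induction with
  | mem w hw =>
    induction hy using AddSubgroup.closure_induction with
    | mem z hz => exact AddSubgroup.subset_closure (genSet_mul hw hz)
    | zero => rw [mul_zero]; exact zero_mem _
    | add y₁ y₂ h₁ h₂ ih₁ ih₂ => rw [mul_add]; exact add_mem ih₁ ih₂
    | neg y₁ h₁ ih => rw [mul_neg]; exact neg_mem ih
  | zero => rw [zero_mul]; exact zero_mem _
  | add x₁ x₂ h₁ h₂ ih₁ ih₂ => rw [add_mul]; exact add_mem ih₁ ih₂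
  | neg x₁ h₁ ih => rw [neg_mul]; exact neg_mem ih

/-- `adOrder` is contained in the additive group generated by `genSet`. -/
theorem adOrder_le_addClosure {O : Subring ℍ[F, a, b]} {z : Dhat F a b}
    (hz : z ∈ adOrder F a b O) : z ∈ AddSubgroup.closure (genSet a b O) := by
  let T : Subring (Dhat F a b) :=
    { carrier := (AddSubgroup.closure (genSet a b O) : Set (Dhat F a b))
      zero_mem' := zero_mem _
      add_mem' := fun h1 h2 => add_mem h1 h2
      neg_mem' := fun h => neg_mem h
      one_mem' := AddSubgroup.subset_closure genSet_one
      mul_mem' := fun h1 h2 => addClosure_mul h1 h2 }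
  have : adOrder F a b O ≤ T := by
    rw [adOrder, Subring.closure_le]
    rintro w (⟨d, hd, rfl⟩ | ⟨c, hc, rfl⟩)
    · exact AddSubgroup.subset_closure ⟨1, one_mem _, d, hd, by rw [map_one, one_mul]⟩
    · exact AddSubgroup.subset_closure ⟨c, hc, 1, one_mem _, by rw [embD_one', mul_one]⟩
  exact this hz

theorem pol_gen {O : Subring ℍ[F, a, b]} (hord : IsOrder (F := F) O)
    {c c' : FAdele F} (hc : c ∈ intAdeles F) (hc' : c' ∈ intAdeles F)
    {o o' : ℍ[F, a, b]} (ho : o ∈ O) (ho' : o' ∈ O) :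
    pol (algebraMap (FAdele F) (Dhat F a b) c * embD F a b o)
      (algebraMap (FAdele F) (Dhat F a b) c' * embD F a b o') ∈ intAdeles F := by
  rw [← Algebra.smul_def, ← Algebra.smul_def, pol_smul']
  have : pol (embD F a b o) (embD F a b o') = algebraMap F (FAdele F) (pol o o') :=
    pol_qmap' _ o o'
  rw [this]
  exact mul_mem (mul_mem hc hc') (algpol_mem_intAdeles hord ho ho')

theorem nrd_gen_mem {O : Subring ℍ[F, a, b]} (hord : IsOrder (F := F) O)
    {c : FAdele F} (hc : c ∈ intAdeles F) {o : ℍ[F, a, b]} (ho : o ∈ O) :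
    nrd (algebraMap (FAdele F) (Dhat F a b) c * embD F a b o) ∈ intAdeles F := by
  rw [nrd_mul', nrd_algebraMap', nrd_embD']
  exact mul_mem (mul_mem hc hc) (algnrd_mem_intAdeles hord ho)

theorem nrd_mem_intAdeles {O : Subring ℍ[F, a, b]} (hord : IsOrder (F := F) O)
    {z : Dhat F a b} (hz : z ∈ adOrder F a b O) : nrd z ∈ intAdeles F := by
  have hz' := adOrder_le_addClosure hz
  suffices h : ∀ w ∈ AddSubgroup.closure (genSet a b O),
      nrd w ∈ intAdeles F ∧ ∀ y ∈ AddSubgroup.closure (genSet a b O), pol w y ∈ intAdeles F by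
    exact (h z hz').1
  intro w hw
  induction hw using AddSubgroup.closure_induction with
  | mem w hw =>
    obtain ⟨c, hc, o, ho, rfl⟩ := hw
    refine ⟨nrd_gen_mem hord hc ho, ?_⟩
    intro y hy
    induction hy using AddSubgroup.closure_induction with
    | mem z hz =>
      obtain ⟨c', hc', o', ho', rfl⟩ := hz
      exact pol_gen hord hc hc' ho ho'
    | zero => rw [pol_zero_right]; exact zero_mem _
    | add y₁ y₂ h₁ h₂ ih₁ ih₂ => rw [pol_add_right]; exact add_mem ih₁ ih₂
    | neg y₁ h₁ ih => rw [pol_neg_right]; exact neg_mem ih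
  | zero =>
    exact ⟨by rw [nrd_zero']; exact zero_mem _,
      fun y hy => by rw [pol_zero_left]; exact zero_mem _⟩
  | add x₁ x₂ h₁ h₂ ih₁ ih₂ =>
    refine ⟨?_, fun y hy => ?_⟩
    · rw [nrd_add']
      exact add_mem (add_mem ih₁.1 ih₂.1) (ih₁.2 x₂ h₂)
    · rw [pol_add_left]
      exact add_mem (ih₁.2 y hy) (ih₂.2 y hy)
  | neg x₁ h₁ ih =>
    refine ⟨by rw [nrd_neg']; exact ih.1, fun y hy => ?_⟩
    rw [pol_neg_left]
    exact neg_mem (ih.2 y hy)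

theorem totPos_nrd (hF : TotallyReal F) (hdef : IsTotallyDefinite a b)
    {g : ℍ[F, a, b]} (hg : g ≠ 0) : TotPos (nrd g) := by
  have hpos : ∀ σ : F →+* ℝ, 0 < σ (nrd g) := by
    intro σ
    obtain ⟨ha, hb⟩ := hdef σ
    have hexp : σ (nrd g) =
        σ g.re ^ 2 - σ a * σ g.imI ^ 2 - σ b * σ g.imJ ^ 2 + σ a * σ b * σ g.imK ^ 2 := by
      simp [nrd, map_add, map_sub, map_mul, map_pow]
    have hnz : g.re ≠ 0 ∨ g.imI ≠ 0 ∨ g.imJ ≠ 0 ∨ g.imK ≠ 0 := by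
      by_contra hzero
      push_neg at hzero
      exact hg (by ext <;> simp [hzero.1, hzero.2.1, hzero.2.2.1, hzero.2.2.2])
    have hann : (0:ℝ) ≤ -σ a := by linarith
    have hbnn : (0:ℝ) ≤ -σ b := by linarith
    have habp : (0:ℝ) < σ a * σ b := mul_pos_of_neg_of_neg ha hb
    have h1 : (0:ℝ) ≤ σ g.re ^ 2 := sq_nonneg _
    have h2 : (0:ℝ) ≤ -σ a * σ g.imI ^ 2 := mul_nonneg hann (sq_nonneg _)
    have h3 : (0:ℝ) ≤ -σ b * σ g.imJ ^ 2 := mul_nonneg hbnn (sq_nonneg _)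
    have h4 : (0:ℝ) ≤ σ a * σ b * σ g.imK ^ 2 := mul_nonneg habp.le (sq_nonneg _)
    have hmapne : ∀ t : F, t ≠ 0 → (0:ℝ) < σ t ^ 2 := by
      intro t ht
      have : σ t ≠ 0 := fun hh => ht (σ.injective (by rw [hh, map_zero]))
      exact lt_of_le_of_ne (sq_nonneg _) (Ne.symm (pow_ne_zero _ this))
    rw [hexp]
    rcases hnz with h | h | h | h
    · linarith [hmapne _ h]
    · have := mul_pos (by linarith : (0:ℝ) < -σ a) (hmapne _ h); linarith
    · have := mul_pos (by linarith : (0:ℝ) < -σ b) (hmapne _ h); linarith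
    · have := mul_pos habp (hmapne _ h); linarith
  refine ⟨?_, hpos⟩
  have hne : Nonempty (InfinitePlace F) := inferInstance
  let w : InfinitePlace F := hne.some
  let σ₀ : F →+* ℝ := NumberField.InfinitePlace.embedding_of_isReal (hF w)
  intro h0
  have := hpos σ₀
  rw [h0, map_zero] at this
  exact lt_irrefl 0 this

theorem fadele_nontrivial (F : Type*) [Field F] [NumberField F] : Nontrivial (FAdele F) := by
  obtain ⟨M, hM⟩ := Ideal.exists_maximal (𝓞 F)
  have hMne : M ≠ ⊥ :=
    Ring.ne_bot_of_isMaximal_of_not_isField hM (NumberField.RingOfIntegers.not_isField F)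
  let v₀ : HeightOneSpectrum (𝓞 F) := ⟨M, hM.isPrime, hMne⟩
  refine ⟨0, 1, fun h => ?_⟩
  have h2 : (0 : Kv F v₀) = 1 := congrArg (fun z : FAdele F => z v₀) h
  exact zero_ne_one h2

end MainAux

/-- **Lemma.** Let `𝒪` be an order in a totally definite quaternion algebra, and let
`[P] ∈ Picent(𝒪)` be represented by the normalizing idele `p`.  If `Nr(P)` is not generated
by a totally positive element of `F^×` (i.e. the idele `nrd(p)` does not lie in
`F_+^× · Ô_F^×`, so `[P] ∉ ker (Nr : Picent(𝒪) → Cl⁺(O_F))`), then the right multiplication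
action of `[P]` on `Cl(𝒪)` has no fixed point: `[I·P] ≠ [I]` for every class `[I]`. -/
theorem picent_action_no_fixed_points
    (F : Type*) [Field F] [NumberField F] (hF : TotallyReal F)
    (a b : F) (hdef : IsTotallyDefinite a b)
    (O : Subring ℍ[F, a, b]) (hord : IsOrder (F := F) O)
    (p : (Dhat F a b)ˣ) (hp : p ∈ adNormalizer F a b O)
    (hnr : ∀ w : (FAdele F)ˣ, (w : FAdele F) = nrd (p : Dhat F a b) →
      w ∉ Subgroup.closure (posPrincipal F ∪ intUnitIdeles F)) :
    ∀ x : (Dhat F a b)ˣ,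
      Quot.mk (clRel F a b O) (x * p) ≠ Quot.mk (clRel F a b O) x := by
  haveI : Nontrivial (FAdele F) := fadele_nontrivial F
  intro x hx
  set nm : Dhat F a b →* FAdele F :=
    { toFun := nrd, map_one' := nrd_one', map_mul' := nrd_mul' } with hnmdef
  set N : (Dhat F a b)ˣ →* (FAdele F)ˣ := Units.map nm with hNdef
  set H : Subgroup (FAdele F)ˣ := Subgroup.closure (posPrincipal F ∪ intUnitIdeles F) with hHdef
  have key : ∀ s t : (Dhat F a b)ˣ, Relation.EqvGen (clRel F a b O) s t →
      N s * (N t)⁻¹ ∈ H := by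
    intro s t h
    induction h with
    | rel s t hst =>
      obtain ⟨g, u, hu, hui, heq⟩ := hst
      have hgne : g ≠ 0 := by
        intro h0
        apply Units.ne_zero s
        rw [heq, h0, embD_zero', zero_mul, zero_mul]
      have hpos : TotPos (nrd g) := totPos_nrd hF hdef hgne
      set wg : (FAdele F)ˣ :=
        Units.map (algebraMap F (FAdele F)).toMonoidHom (Units.mk0 (nrd g) hpos.1) with hwgdef
      have hwg : wg ∈ posPrincipal F := ⟨nrd g, hpos, rfl⟩
      set wu : (FAdele F)ˣ := N u with hwudef
      have hwu : wu ∈ intUnitIdeles F := by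
        constructor
        · exact nrd_mem_intAdeles hord hu
        · have hcoe : ((wu⁻¹ : (FAdele F)ˣ) : FAdele F) = nrd ((↑(u⁻¹) : Dhat F a b)) := by
            rw [hwudef, ← map_inv]
            rfl
          rw [hcoe]
          exact nrd_mem_intAdeles hord hui
      have hEq : N s * (N t)⁻¹ = wg * wu := by
        rw [← map_inv]
        apply Units.ext
        show nrd ((s : Dhat F a b)) * nrd ((↑(t⁻¹) : Dhat F a b))
          = algebraMap F (FAdele F) (nrd g) * nrd ((u : Dhat F a b))
        have h2 : nrd ((t : Dhat F a b)) * nrd ((↑(t⁻¹) : Dhat F a b)) = 1 := by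
          rw [← nrd_mul', Units.mul_inv]
          exact nrd_one'
        rw [heq, nrd_mul', nrd_mul', nrd_embD']
        calc algebraMap F (FAdele F) (nrd g) * nrd ((t : Dhat F a b)) * nrd ((u : Dhat F a b))
              * nrd ((↑(t⁻¹) : Dhat F a b))
            = algebraMap F (FAdele F) (nrd g) * nrd ((u : Dhat F a b))
              * (nrd ((t : Dhat F a b)) * nrd ((↑(t⁻¹) : Dhat F a b))) := by ring
          _ = algebraMap F (FAdele F) (nrd g) * nrd ((u : Dhat F a b)) := by rw [h2, mul_one]
      rw [hEq]
      exact mul_mem (Subgroup.subset_closure (Or.inl hwg))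
        (Subgroup.subset_closure (Or.inr hwu))
    | refl s =>
      have h1 : N s * (N s)⁻¹ = 1 := by group
      rw [h1]; exact one_mem H
    | symm s t h ih =>
      have h2 := inv_mem ih
      rwa [mul_inv_rev, inv_inv] at h2
    | trans s t r h1 h2 ih1 ih2 =>
      have h3 := mul_mem ih1 ih2
      have he : N s * (N t)⁻¹ * (N t * (N r)⁻¹) = N s * (N r)⁻¹ := by group
      rwa [he] at h3
  have hkey := key (x * p) x (Quot.eqvGen_exact hx)
  have hNp : N (x * p) * (N x)⁻¹ = N p := by
    rw [map_mul, mul_comm (N x) (N p), mul_assoc]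
    have : N x * (N x)⁻¹ = 1 := by group
    rw [this, mul_one]
  rw [hNp] at hkey
  exact hnr (N p) rfl hkey


end QPaper
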